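/- arXiv:2404.13836 — 6 statements merged into one kernel-verified Lean document; each statement's English description precedes it below -/
import Mathlib

section
/- Let T and K be natural numbers with K < T. Let B₁ and B₂ be real T×K matrices, let M₁ and M₂ be real symmetric positive semidefinite K×K matrices, and let r₁, r₂ ≥ 0 be real numbers. If B₁ M₁ B₁ᵀ + r₁ • I_T = B₂ M₂ B₂ᵀ + r₂ • I_T, then r₁ = r₂ (and consequently B₁ M₁ B₁ᵀ = B₂ M₂ B₂ᵀ). -/
open Matrix

lemma smul_one_posDef {T : ℕ} {c : ℝ} (hc : 0 < c) :
    (c • (1 : Matrix (Fin T) (Fin T) ℝ)).PosDef := by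
  rw [smul_one_eq_diagonal]
  exact posDef_diagonal_iff.mpr (fun _ => hc)

lemma aux_noise {T K : ℕ} (hKT : K < T)
    (B₁ B₂ : Matrix (Fin T) (Fin K) ℝ)
    (M₁ M₂ : Matrix (Fin K) (Fin K) ℝ)
    (hM₁ : M₁.PosSemidef) (hM₂ : M₂.PosSemidef)
    (r₁ r₂ : ℝ) (hlt : r₂ < r₁)
    (h : B₁ * M₁ * B₁ᵀ + r₁ • (1 : Matrix (Fin T) (Fin T) ℝ)
       = B₂ * M₂ * B₂ᵀ + r₂ • (1 : Matrix (Fin T) (Fin T) ℝ)) : False := by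
  have key : B₁ * M₁ * B₁ᵀ + (r₁ - r₂) • (1 : Matrix (Fin T) (Fin T) ℝ)
      = B₂ * M₂ * B₂ᵀ := by
    have := sub_eq_sub_iff_add_eq_add.mpr h
    rw [sub_smul]
    abel_nf
    abel_nf at this
    linear_combination (norm := abel) this
  have hpsd1 : (B₁ * M₁ * B₁ᵀ).PosSemidef := by
    have := hM₁.mul_mul_conjTranspose_same B₁
    rwa [conjTranspose_eq_transpose_of_trivial] at this
  have hpd : (B₁ * M₁ * B₁ᵀ + (r₁ - r₂) • (1 : Matrix (Fin T) (Fin T) ℝ)).PosDef :=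
    Matrix.PosDef.posSemidef_add hpsd1 (smul_one_posDef (by linarith))
  rw [key] at hpd
  have hrank : (B₂ * M₂ * B₂ᵀ).rank = T := by
    rw [rank_of_isUnit _ hpd.isUnit, Fintype.card_fin]
  have hle : (B₂ * M₂ * B₂ᵀ).rank ≤ K := by
    calc (B₂ * M₂ * B₂ᵀ).rank ≤ (B₂ * M₂).rank := rank_mul_le_left _ _
    _ ≤ K := le_trans (rank_mul_le_right _ _) M₂.rank_le_card_width |>.trans (by simp)
  omega

/-- Noise-variance identification step in Theorem 1 (Equivalence class):
if `B₁ M₁ B₁ᵀ + r₁ I = B₂ M₂ B₂ᵀ + r₂ I` with `M₁, M₂` PSD of size `K < T`,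
then `r₁ = r₂` and hence `B₁ M₁ B₁ᵀ = B₂ M₂ B₂ᵀ`. -/
theorem noise_variance_identification {T K : ℕ} (hKT : K < T)
    (B₁ B₂ : Matrix (Fin T) (Fin K) ℝ)
    (M₁ M₂ : Matrix (Fin K) (Fin K) ℝ)
    (hM₁ : M₁.PosSemidef) (hM₂ : M₂.PosSemidef)
    (r₁ r₂ : ℝ) (hr₁ : 0 ≤ r₁) (hr₂ : 0 ≤ r₂)
    (h : B₁ * M₁ * B₁ᵀ + r₁ • (1 : Matrix (Fin T) (Fin T) ℝ)
       = B₂ * M₂ * B₂ᵀ + r₂ • (1 : Matrix (Fin T) (Fin T) ℝ)) :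
    r₁ = r₂ ∧ B₁ * M₁ * B₁ᵀ = B₂ * M₂ * B₂ᵀ := by
  have hr : r₁ = r₂ := by
    rcases lt_trichotomy r₁ r₂ with hlt | heq | hgt
    · exact absurd h.symm (fun h' => aux_noise hKT B₂ B₁ M₂ M₁ hM₂ hM₁ r₂ r₁ hlt h')
    · exact heq
    · exact absurd h (fun h' => aux_noise hKT B₁ B₂ M₁ M₂ hM₁ hM₂ r₁ r₂ hgt h')
  refine ⟨hr, ?_⟩
  subst hr
  exact add_right_cancel h
end

section
/- Let A and B be real symmetric n×n matrices, and let λ_A, λ_B : Fin n → ℝ enumerate (with multiplicity) the eigenvalues of A and B respectively. Then there exists a permutation r of Fin n such that Σ_{i} (λ_A(i) − λ_B(r(i)))² ≤ ‖A − B‖_F². -/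
open Matrix Finset

/-- The Frobenius norm of a real matrix. -/
noncomputable def frobNorm {m n : Type*} [Fintype m] [Fintype n] (A : Matrix m n ℝ) : ℝ :=
  Real.sqrt (∑ i, ∑ j, (A i j) ^ 2)

lemma frobSq_eq_trace {n : ℕ} (M : Matrix (Fin n) (Fin n) ℝ) :
    ∑ i, ∑ j, (M i j) ^ 2 = Matrix.trace (Mᴴ * M) := by
  simp only [Matrix.trace, Matrix.diag, Matrix.mul_apply, Matrix.conjTranspose_apply,
    star_trivial, sq]
  exact Finset.sum_comm

lemma frobSq_conj {n : ℕ} (U V M : Matrix (Fin n) (Fin n) ℝ)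
    (hU : U ∈ Matrix.unitaryGroup (Fin n) ℝ) (hV : V ∈ Matrix.unitaryGroup (Fin n) ℝ) :
    ∑ i, ∑ j, ((star U * M * V) i j) ^ 2 = ∑ i, ∑ j, (M i j) ^ 2 := by
  rw [frobSq_eq_trace, frobSq_eq_trace]
  have h1 : (star U * M * V)ᴴ * (star U * M * V) = Vᴴ * (Mᴴ * M) * V := by
    have hUU : U * star U = 1 := (Matrix.mem_unitaryGroup_iff).mp hU
    calc (star U * M * V)ᴴ * (star U * M * V)
        = Vᴴ * (Mᴴ * ((U * star U) * (M * V))) := by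
          simp only [Matrix.conjTranspose_mul, Matrix.conjTranspose_conjTranspose,
            Matrix.star_eq_conjTranspose]
          noncomm_ring
      _ = Vᴴ * (Mᴴ * M) * V := by rw [hUU]; noncomm_ring
  rw [h1, Matrix.trace_mul_cycle]
  have hVV : V * Vᴴ = 1 := (Matrix.mem_unitaryGroup_iff).mp hV
  rw [← Matrix.mul_assoc, hVV, Matrix.one_mul]

/-- Hoffman–Wielandt-type eigenvalue perturbation inequality (Li 1994): for real
symmetric `A, B` with eigenvalue enumerations `lamA, lamB` (with multiplicity),
there is a matching `r` with `Σ_i (λ_A(i) − λ_B(r(i)))² ≤ ‖A − B‖_F²`. -/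
theorem hoffman_wielandt {n : ℕ} (A B : Matrix (Fin n) (Fin n) ℝ)
    (hA : A.IsHermitian) (hB : B.IsHermitian)
    (lamA lamB : Fin n → ℝ)
    (hlamA : ∃ σ : Equiv.Perm (Fin n), lamA = hA.eigenvalues ∘ σ)
    (hlamB : ∃ σ : Equiv.Perm (Fin n), lamB = hB.eigenvalues ∘ σ) :
    ∃ r : Equiv.Perm (Fin n),
      ∑ i, (lamA i - lamB (r i)) ^ 2 ≤ (frobNorm (A - B)) ^ 2 := by
  obtain ⟨σA, hσA⟩ := hlamA
  obtain ⟨σB, hσB⟩ := hlamB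
  set μA := hA.eigenvalues with hμA
  set μB := hB.eigenvalues with hμB
  set U : Matrix (Fin n) (Fin n) ℝ := (hA.eigenvectorUnitary : Matrix (Fin n) (Fin n) ℝ) with hU
  set V : Matrix (Fin n) (Fin n) ℝ := (hB.eigenvectorUnitary : Matrix (Fin n) (Fin n) ℝ) with hV
  have hUmem : U ∈ Matrix.unitaryGroup (Fin n) ℝ := hA.eigenvectorUnitary.2
  have hVmem : V ∈ Matrix.unitaryGroup (Fin n) ℝ := hB.eigenvectorUnitary.2
  have hAeq : A = U * Matrix.diagonal μA * star U := by
    have := hA.spectral_theorem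
    rwa [RCLike.ofReal_real_eq_id, Function.id_comp] at this
  have hBeq : B = V * Matrix.diagonal μB * star V := by
    have := hB.spectral_theorem
    rwa [RCLike.ofReal_real_eq_id, Function.id_comp] at this
  set W : Matrix (Fin n) (Fin n) ℝ := star U * V with hW
  have hWmem : W ∈ Matrix.unitaryGroup (Fin n) ℝ := by
    exact mul_mem (Unitary.star_mem hUmem) hVmem
  have hWW : W * star W = 1 := (Matrix.mem_unitaryGroup_iff).mp hWmem
  have hWW' : star W * W = 1 := (Matrix.mem_unitaryGroup_iff').mp hWmem
  -- the conjugated difference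
  have key : star U * (A - B) * V = Matrix.diagonal μA * W - W * Matrix.diagonal μB := by
    have hsU : star U * U = 1 := (Matrix.mem_unitaryGroup_iff').mp hUmem
    have hsV : star V * V = 1 := (Matrix.mem_unitaryGroup_iff').mp hVmem
    rw [Matrix.mul_sub, Matrix.sub_mul]
    congr 1
    · rw [hAeq]
      calc star U * (U * Matrix.diagonal μA * star U) * V
          = (star U * U) * (Matrix.diagonal μA * (star U * V)) := by noncomm_ring
        _ = Matrix.diagonal μA * W := by rw [hsU, Matrix.one_mul]
    · rw [hBeq]
      calc star U * (V * Matrix.diagonal μB * star V) * V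
          = (star U * V) * (Matrix.diagonal μB * (star V * V)) := by noncomm_ring
        _ = W * Matrix.diagonal μB := by rw [hsV, Matrix.mul_one]
  -- Frobenius norm squared
  have hfrob : (frobNorm (A - B)) ^ 2 = ∑ i, ∑ j, ((A - B) i j) ^ 2 := by
    rw [frobNorm, Real.sq_sqrt]
    positivity
  have hfrob2 : (frobNorm (A - B)) ^ 2
      = ∑ i, ∑ j, (μA i - μB j) ^ 2 * (W i j) ^ 2 := by
    rw [hfrob, ← frobSq_conj U V (A - B) hUmem hVmem, key]
    congr 1; funext i; congr 1; funext j
    rw [Matrix.sub_apply, Matrix.diagonal_mul, Matrix.mul_diagonal]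
    ring
  -- the doubly stochastic matrix S
  set S : Matrix (Fin n) (Fin n) ℝ := fun i j => (W i j) ^ 2 with hS
  have hSmem : S ∈ doublyStochastic ℝ (Fin n) := by
    rw [mem_doublyStochastic_iff_sum]
    refine ⟨fun i j => sq_nonneg _, fun i => ?_, fun j => ?_⟩
    · have := congrFun (congrFun hWW i) i
      simp only [Matrix.mul_apply, Matrix.one_apply_eq] at this
      rw [← this]
      congr 1; funext j
      simp [hS, Matrix.star_apply, sq]
    · have := congrFun (congrFun hWW' j) j
      simp only [Matrix.mul_apply, Matrix.one_apply_eq] at this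
      rw [← this]
      congr 1; funext i
      simp [hS, Matrix.star_apply, sq, mul_comm]
  obtain ⟨w, hw0, hw1, hwS⟩ := exists_eq_sum_perm_of_mem_doublyStochastic hSmem
  -- the cost function
  set c : Fin n → Fin n → ℝ := fun i j => (μA i - μB j) ^ 2 with hc
  have hperm : ∀ σ : Equiv.Perm (Fin n),
      ∑ i, ∑ j, c i j * (σ.permMatrix ℝ) i j = ∑ i, c i (σ i) := by
    intro σ
    congr 1; funext i
    rw [Finset.sum_eq_single (σ i)]
    · simp [Equiv.Perm.permMatrix, PEquiv.toMatrix_apply, Equiv.toPEquiv_apply]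
    · intro j _ hj
      simp [Equiv.Perm.permMatrix, PEquiv.toMatrix_apply, Equiv.toPEquiv_apply, Ne.symm hj]
    · simp
  -- there is a minimizing permutation
  obtain ⟨τ, -, hτmin⟩ := Finset.exists_min_image Finset.univ
    (fun σ : Equiv.Perm (Fin n) => ∑ i, c i (σ i)) ⟨1, Finset.mem_univ 1⟩
  have hSentry : ∀ i j, S i j = ∑ σ : Equiv.Perm (Fin n), w σ * (σ.permMatrix ℝ) i j := by
    intro i j
    rw [← hwS]
    simp only [Matrix.sum_apply, Matrix.smul_apply, smul_eq_mul]
  have hτle : ∑ i, c i (τ i) ≤ ∑ i, ∑ j, c i j * S i j := by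
    have hsum : ∑ i, ∑ j, c i j * S i j
        = ∑ σ : Equiv.Perm (Fin n), w σ * ∑ i, c i (σ i) := by
      calc ∑ i, ∑ j, c i j * S i j
          = ∑ i, ∑ j, ∑ σ : Equiv.Perm (Fin n), w σ * (c i j * (σ.permMatrix ℝ) i j) := by
            refine Finset.sum_congr rfl fun i _ => Finset.sum_congr rfl fun j _ => ?_
            rw [hSentry i j, Finset.mul_sum]
            refine Finset.sum_congr rfl fun σ _ => by ring
        _ = ∑ i, ∑ σ : Equiv.Perm (Fin n), ∑ j, w σ * (c i j * (σ.permMatrix ℝ) i j) :=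
            Finset.sum_congr rfl fun i _ => Finset.sum_comm
        _ = ∑ σ : Equiv.Perm (Fin n), ∑ i, ∑ j, w σ * (c i j * (σ.permMatrix ℝ) i j) :=
            Finset.sum_comm
        _ = ∑ σ : Equiv.Perm (Fin n), w σ * ∑ i, c i (σ i) := by
            refine Finset.sum_congr rfl fun σ _ => ?_
            rw [← hperm σ]
            simp [Finset.mul_sum]
    rw [hsum]
    have h1 : ∑ i, c i (τ i) = ∑ σ : Equiv.Perm (Fin n), w σ * ∑ i, c i (τ i) := by
      rw [← Finset.sum_mul, hw1, one_mul]
    rw [h1]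
    refine Finset.sum_le_sum fun σ _ => ?_
    exact mul_le_mul_of_nonneg_left (hτmin σ (Finset.mem_univ σ)) (hw0 σ)
  -- conclude
  refine ⟨σB⁻¹ * τ * σA, ?_⟩
  have hgoal : ∑ i, (lamA i - lamB ((σB⁻¹ * τ * σA) i)) ^ 2 = ∑ i, c i (τ i) := by
    have : ∀ i, (lamA i - lamB ((σB⁻¹ * τ * σA) i)) ^ 2
        = (fun j => c j (τ j)) (σA i) := by
      intro i
      simp [hσA, hσB, hc, Equiv.Perm.mul_apply]
    rw [Finset.sum_congr rfl fun i _ => this i]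
    exact Equiv.sum_comp σA (fun j => c j (τ j))
  rw [hgoal, hfrob2]
  calc ∑ i, c i (τ i) ≤ ∑ i, ∑ j, c i j * S i j := hτle
    _ = ∑ i, ∑ j, (μA i - μB j) ^ 2 * (W i j) ^ 2 := rfl
end

section
/- Let P, N be positive natural numbers, let m : Fin P → ℕ give group sizes, and let ι := Σ i : Fin P, Fin (m i) be the grouped index set. Let X be a real N×ι matrix, y : Fin N → ℝ, and λ > 0. Define the group-lasso objective f(β) := (1/(2N)) Σ_{n} (y n − Σ_{a : ι} X n a * β a)² + λ Σ_{i : Fin P} sqrt(Σ_{j : Fin (m i)} (β ⟨i,j⟩)²). If for every group i : Fin P one has sqrt(Σ_{j} ((Xᵀ *ᵥ y) ⟨i,j⟩)²) ≤ λ * N, then β = 0 is a global minimizer of f, i.e., f(0) ≤ f(β) for every β : ι → ℝ. -/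
open Matrix

lemma cs_sum {n : ℕ} (f g : Fin n → ℝ) :
    ∑ j, f j * g j ≤ Real.sqrt (∑ j, f j ^ 2) * Real.sqrt (∑ j, g j ^ 2) := by
  have h := Finset.sum_mul_sq_le_sq_mul_sq Finset.univ f g
  calc ∑ j, f j * g j ≤ |∑ j, f j * g j| := le_abs_self _
    _ = Real.sqrt ((∑ j, f j * g j) ^ 2) := (Real.sqrt_sq_eq_abs _).symm
    _ ≤ Real.sqrt ((∑ j, f j ^ 2) * ∑ j, g j ^ 2) := Real.sqrt_le_sqrt h
    _ = _ := Real.sqrt_mul (by positivity) _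

/-- Lemma B.4 (null-consistency of the group lasso), deterministic core:
if the group-wise dual certificate satisfies
`sqrt(Σ_j ((Xᵀ y)_{⟨i,j⟩})²) ≤ λ N` for every group `i`, then `β = 0` is a global
minimizer of the group-lasso objective
`f(β) = (1/(2N)) Σ_n (y n − (Xβ) n)² + λ Σ_i ‖β_i‖₂`. -/
theorem group_lasso_null_consistency {P N : ℕ} (hP : 0 < P) (hN : 0 < N)
    (m : Fin P → ℕ)
    (X : Matrix (Fin N) ((i : Fin P) × Fin (m i)) ℝ)
    (y : Fin N → ℝ) (lam : ℝ) (hlam : 0 < lam)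
    (f : (((i : Fin P) × Fin (m i)) → ℝ) → ℝ)
    (hf : ∀ β, f β =
        (1 / (2 * (N : ℝ))) * ∑ n, (y n - ∑ a, X n a * β a) ^ 2
          + lam * ∑ i : Fin P, Real.sqrt (∑ j : Fin (m i), (β ⟨i, j⟩) ^ 2))
    (hcert : ∀ i : Fin P,
        Real.sqrt (∑ j : Fin (m i), ((Xᵀ *ᵥ y) ⟨i, j⟩) ^ 2) ≤ lam * N) :
    ∀ β, f 0 ≤ f β := by
  intro β
  rw [hf, hf]
  simp only [Pi.zero_apply, mul_zero, Finset.sum_const_zero, sub_zero, Real.sqrt_zero,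
    ne_eq, OfNat.ofNat_ne_zero, not_false_eq_true, zero_pow]
  set C : ℝ := ∑ a, (Xᵀ *ᵥ y) a * β a with hC
  set Q : ℝ := ∑ n, (∑ a, X n a * β a) ^ 2 with hQ
  set S : ℝ := ∑ i : Fin P, Real.sqrt (∑ j : Fin (m i), (β ⟨i, j⟩) ^ 2) with hS
  have hexp : ∑ n, (y n - ∑ a, X n a * β a) ^ 2
      = (∑ n, y n ^ 2) - 2 * C + Q := by
    have hcross : ∑ n, y n * ∑ a, X n a * β a = C := by
      rw [hC]
      simp only [Finset.mul_sum]
      rw [Finset.sum_comm]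
      simp only [mulVec, dotProduct, transpose_apply, Finset.sum_mul]
      apply Finset.sum_congr rfl; intro a _
      apply Finset.sum_congr rfl; intro n _
      ring
    rw [hQ, ← hcross, Finset.mul_sum, ← Finset.sum_sub_distrib, ← Finset.sum_add_distrib]
    apply Finset.sum_congr rfl; intro n _
    ring
  have hCle : C ≤ lam * N * S := by
    rw [hC, hS, ← Finset.univ_sigma_univ, Finset.sum_sigma]
    rw [Finset.mul_sum]
    apply Finset.sum_le_sum
    intro i _
    calc ∑ j : Fin (m i), (Xᵀ *ᵥ y) ⟨i, j⟩ * β ⟨i, j⟩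
        ≤ Real.sqrt (∑ j : Fin (m i), ((Xᵀ *ᵥ y) ⟨i, j⟩) ^ 2) *
          Real.sqrt (∑ j : Fin (m i), (β ⟨i, j⟩) ^ 2) := cs_sum _ _
      _ ≤ lam * N * Real.sqrt (∑ j : Fin (m i), (β ⟨i, j⟩) ^ 2) := by
          apply mul_le_mul_of_nonneg_right (hcert i) (Real.sqrt_nonneg _)
  have hQ0 : 0 ≤ Q := Finset.sum_nonneg fun n _ => sq_nonneg _
  have hN' : (0 : ℝ) < N := Nat.cast_pos.mpr hN
  rw [hexp]
  have h1 : (0:ℝ) < 1 / (2 * (N:ℝ)) := by positivity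
  have key : 2 * C ≤ Q + 2 * (N:ℝ) * (lam * S) := by nlinarith
  have h2 := mul_le_mul_of_nonneg_left key h1.le
  have h3 : 1 / (2 * (N:ℝ)) * (Q + 2 * (N:ℝ) * (lam * S))
      = 1 / (2 * (N:ℝ)) * Q + lam * S := by field_simp
  rw [h3] at h2
  nlinarith
end

section
/- Let H be a real inner product space (e.g., EuclideanSpace ℝ (Fin p)), fix θ* ∈ H, and let q : H → H → ℝ. Fix θ ∈ H and m ∈ H, and let β > γ ≥ 0. Assume: (i) the function q(·, θ*) is differentiable with gradient ∇₁q(·, θ*) and is β-strongly concave, i.e., for all u, v ∈ H, q(u, θ*) ≤ q(v, θ*) + ⟪∇₁q(v, θ*), u − v⟫ − (β/2)‖u − v‖²; (ii) ∇₁q(m, θ) = 0 and ∇₁q(θ*, θ*) = 0 (first-order optimality of the M-step maximizers); (iii) the gradient-stability condition ‖∇₁q(m, θ*) − ∇₁q(m, θ)‖ ≤ γ ‖θ − θ*‖ holds. Then ‖m − θ*‖ ≤ (γ/β) ‖θ − θ*‖. -/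
open scoped RealInnerProductSpace

/-- Lemma B.6 (Balakrishnan et al. 2017): if the population EM objective `q(·, θ*)` is
`β`-strongly concave with gradient `g(·, θ*)`, the M-step maximizers satisfy the
first-order conditions `∇₁q(m, θ) = 0` and `∇₁q(θ*, θ*) = 0`, and the gradient-stability
condition `‖∇₁q(m, θ*) − ∇₁q(m, θ)‖ ≤ γ‖θ − θ*‖` holds with `0 ≤ γ < β`, then
`‖m − θ*‖ ≤ (γ/β)‖θ − θ*‖`. -/
theorem em_operator_contractive {H : Type*} [NormedAddCommGroup H]
    [InnerProductSpace ℝ H] [CompleteSpace H]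
    (θstar θ m : H) (q : H → H → ℝ) (g : H → H → H)
    (β γ : ℝ) (hγ : 0 ≤ γ) (hβγ : γ < β)
    (hdiff : ∀ v : H, HasGradientAt (fun u => q u θstar) (g v θstar) v)
    (hdiffθ : HasGradientAt (fun u => q u θ) (g m θ) m)
    (hconc : ∀ u v : H,
      q u θstar ≤ q v θstar + ⟪g v θstar, u - v⟫ - (β / 2) * ‖u - v‖ ^ 2)
    (hm : g m θ = 0) (hθstar : g θstar θstar = 0)
    (hgrad : ‖g m θstar - g m θ‖ ≤ γ * ‖θ - θstar‖) :
    ‖m - θstar‖ ≤ (γ / β) * ‖θ - θstar‖ := by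
  have hβ : 0 < β := lt_of_le_of_lt hγ hβγ
  have h1 := hconc m θstar
  have h2 := hconc θstar m
  rw [hθstar] at h1
  simp only [inner_zero_left] at h1
  have hnorm : ‖θstar - m‖ = ‖m - θstar‖ := norm_sub_rev _ _
  have hkey : β * ‖m - θstar‖ ^ 2 ≤ ⟪g m θstar, θstar - m⟫ := by
    rw [hnorm] at h2
    linarith
  have h3 : ⟪g m θstar, θstar - m⟫ = ⟪g m θstar - g m θ, θstar - m⟫ := by
    rw [hm]; simp
  have h4 : ⟪g m θstar - g m θ, θstar - m⟫ ≤ ‖g m θstar - g m θ‖ * ‖m - θstar‖ := by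
    calc ⟪g m θstar - g m θ, θstar - m⟫ ≤ ‖g m θstar - g m θ‖ * ‖θstar - m‖ :=
          real_inner_le_norm _ _
      _ = ‖g m θstar - g m θ‖ * ‖m - θstar‖ := by rw [hnorm]
  have h5 : β * ‖m - θstar‖ ^ 2 ≤ γ * ‖θ - θstar‖ * ‖m - θstar‖ := by
    calc β * ‖m - θstar‖ ^ 2 ≤ ‖g m θstar - g m θ‖ * ‖m - θstar‖ := by
          linarith [hkey, h4, h3.le, h3.ge]
      _ ≤ γ * ‖θ - θstar‖ * ‖m - θstar‖ :=
          mul_le_mul_of_nonneg_right hgrad (norm_nonneg _)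
  rcases eq_or_lt_of_le (norm_nonneg (m - θstar)) with h0 | h0
  · rw [← h0]
    positivity
  · rw [div_mul_eq_mul_div, le_div_iff₀ hβ]
    nlinarith [h5]
end

section
/- Let W be a real P×P matrix and let A := W ∘ W denote its entrywise (Hadamard) square, so all entries of A are nonnegative. Then trace(Matrix.exp ℝ A) ≥ P, and trace(Matrix.exp ℝ A) = P if and only if A is nilpotent, i.e., A^P = 0. -/
/-!
Expanding the exponential, `trace (exp A) = ∑ₖ trace (A ^ k) / k!`, whose `k = 0` term is `P`.
For `A = W ⊙ W` every entry of every power `A ^ k` is nonnegative, so all terms are nonnegative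
and equality holds iff `trace (A ^ k) = 0` for every `k ≥ 1`. For a nonnegative matrix,
`(A ^ k) i j > 0` iff the graph of positive entries has a walk of length `k` from `i` to `j`.
A walk of length `P` visits some vertex twice and so contains a closed walk, which would make
some diagonal entry of a positive power, hence its trace, positive. Conversely a nilpotent
matrix has nilpotent powers, whose traces are nilpotent reals, i.e. zero.
-/

open Matrix
open scoped Matrix Nat

theorem Quiver.Path.exists_cycle_of_not_nodup_vertices {V : Type*} [Quiver V] {a b : V}
    (p : Path a b) (hp : ¬ p.vertices.Nodup) : ∃ (v : V) (c : Path v v), c.length ≠ 0 := by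
  induction p with
  | nil => simp at hp
  | @cons c b p e ih =>
    rw [Path.vertices_cons, List.nodup_concat, not_and_or, not_not] at hp
    rcases hp with hb | hp
    · obtain ⟨-, q, -⟩ := p.exists_eq_comp_of_mem_vertices hb
      exact ⟨b, q.cons e, by simp⟩
    · exact ih hp

theorem Quiver.Path.exists_cycle_of_card_le_length {V : Type*} [Quiver V] [Fintype V]
    {a b : V} (p : Path a b) (hp : Fintype.card V ≤ p.length) :
    ∃ (v : V) (c : Path v v), c.length ≠ 0 :=
  p.exists_cycle_of_not_nodup_vertices fun h => by
    have := h.length_le_card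
    simp only [Path.vertices_length] at this
    omega

theorem HasSum.eq_iff_forall_ne_eq_zero_of_nonneg {ι α : Type*} [AddCommMonoid α]
    [PartialOrder α] [IsOrderedCancelAddMonoid α] [TopologicalSpace α] [OrderClosedTopology α]
    {f : ι → α} {a : α} (hf : HasSum f a) (hf0 : ∀ i, 0 ≤ f i) (i : ι) :
    a = f i ↔ ∀ j ≠ i, f j = 0 := by
  classical
  refine ⟨fun ha j hji => ?_, fun h => hf.unique (hasSum_single i h)⟩
  have hpair : f i + f j ≤ a := by
    simpa [Finset.sum_pair hji.symm] using sum_le_hasSum {i, j} (fun k _ => hf0 k) hf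
  rw [ha] at hpair
  exact le_antisymm (by simpa using hpair) (hf0 j)

namespace Matrix

theorem hasSum_trace_exp {n 𝕂 : Type*} [Fintype n] [DecidableEq n] [RCLike 𝕂]
    (A : Matrix n n 𝕂) :
    HasSum (fun k => (k !⁻¹ : 𝕂) * trace (A ^ k)) (trace (NormedSpace.exp A)) := by
  have h := open scoped Matrix.Norms.Operator in
    (NormedSpace.exp_series_hasSum_exp' (𝕂 := 𝕂) A).map (traceAddMonoidHom n 𝕂)
      continuous_id.matrix_trace
  convert h using 1
  · ext k
    simp [trace_smul]
  -- the operator norm induces the product topology, so the two exponentials agree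
  · rfl

variable {n R : Type*} [Fintype n] [DecidableEq n] [CommRing R] [LinearOrder R]
  [IsStrictOrderedRing R] {A : Matrix n n R}

theorem trace_pow_nonneg (hA : ∀ i j, 0 ≤ A i j) (k : ℕ) : 0 ≤ trace (A ^ k) :=
  Finset.sum_nonneg fun i _ => pow_apply_nonneg hA k i i

theorem pow_card_eq_zero_of_trace_pow_eq_zero (hA : ∀ i j, 0 ≤ A i j)
    (htr : ∀ k ≠ 0, trace (A ^ k) = 0) : A ^ Fintype.card n = 0 := by
  let := toQuiver A
  ext i j
  by_contra hij
  obtain ⟨⟨p, hp⟩⟩ := (pow_apply_pos_iff_nonempty_path hA _ i j).1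
    ((pow_apply_nonneg hA _ i j).lt_of_ne' hij)
  obtain ⟨v, c, hc⟩ := p.exists_cycle_of_card_le_length hp.ge
  have hcycle : 0 < (A ^ c.length) v v := (pow_apply_pos_iff_nonempty_path hA _ v v).2 ⟨c, rfl⟩
  have htr_pos : 0 < trace (A ^ c.length) := hcycle.trans_le <|
    Finset.single_le_sum (fun i _ => pow_apply_nonneg hA _ i i) (Finset.mem_univ v)
  exact htr_pos.ne' (htr _ hc)

theorem pow_card_eq_zero_iff_trace_pow_eq_zero (hA : ∀ i j, 0 ≤ A i j) :
    A ^ Fintype.card n = 0 ↔ ∀ k ≠ 0, trace (A ^ k) = 0 :=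
  ⟨fun h _ hk =>
    (isNilpotent_trace_of_isNilpotent (IsNilpotent.pow_of_pos ⟨_, h⟩ hk)).eq_zero,
    pow_card_eq_zero_of_trace_pow_eq_zero hA⟩

end Matrix

/-- NoTears acyclicity characterization (Zheng et al. 2018), algebraic content:
for `A := W ∘ W` (Hadamard square), `trace(exp(A)) ≥ P`, with equality iff `A` is
nilpotent, i.e. `A^P = 0`. -/
theorem notears_acyclicity {P : ℕ} (W : Matrix (Fin P) (Fin P) ℝ) :
    (P : ℝ) ≤ (NormedSpace.exp (W ⊙ W)).trace ∧
      ((NormedSpace.exp (W ⊙ W)).trace = (P : ℝ) ↔ (W ⊙ W) ^ P = 0) := by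
  set A := W ⊙ W
  have hA : ∀ i j, 0 ≤ A i j := fun i j => mul_self_nonneg (W i j)
  have hsum := hasSum_trace_exp A
  have hterm (k : ℕ) : 0 ≤ (k !⁻¹ : ℝ) * trace (A ^ k) :=
    mul_nonneg (by positivity) (trace_pow_nonneg hA k)
  have hterm_zero : ((0 !)⁻¹ : ℝ) * trace (A ^ 0) = P := by simp
  refine ⟨hterm_zero ▸ le_hasSum hsum 0 fun k _ => hterm k, ?_⟩
  have hnil := pow_card_eq_zero_iff_trace_pow_eq_zero hA
  rw [Fintype.card_fin] at hnil
  rw [← hterm_zero, hsum.eq_iff_forall_ne_eq_zero_of_nonneg hterm 0, hnil]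
  simp [Nat.factorial_ne_zero]
end

section
/- Let Z and Z̄ be real T×K matrices with Zᵀ Z and Z̄ᵀ Z̄ positive definite, and let Z = U H and Z̄ = Ū H̄ be polar decompositions, i.e., Uᵀ U = Ūᵀ Ū = I_K and H, H̄ are symmetric positive definite K×K matrices. Then ‖U − Ū‖_F ≤ ‖Z − Z̄‖_F / min(σ_min(Z), σ_min(Z̄)), where σ_min(A) := sqrt(minEig(Aᵀ A)) is the smallest singular value. -/
open Matrix

/-- The smallest eigenvalue of a real symmetric (Hermitian) matrix. -/
noncomputable def minEig {n : Type*} [Fintype n] [DecidableEq n]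
    (A : Matrix n n ℝ) (hA : A.IsHermitian) : ℝ :=
  ⨅ i, hA.eigenvalues i

/-- The smallest singular value `σ_min(A) = sqrt(minEig(Aᵀ A))` of a real matrix. -/
noncomputable def sigmaMin {T K : ℕ} (A : Matrix (Fin T) (Fin K) ℝ) : ℝ :=
  Real.sqrt (minEig (Aᵀ * A) (by simpa using Matrix.isHermitian_conjTranspose_mul_self A))

/-!
Write `E = U H - Ū H̄` and `S = 1 - UᵀŪ`, and split `U - Ū = U S - (1 - UUᵀ) Ū` into its
components in the range of `U` and orthogonal to it. The first satisfies the Sylvester equation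
`H S + S H̄ = UᵀE - EᵀŪ`; since `H ⪰ σ_min(Z)` and `H̄ ⪰ σ_min(Z̄)` this gives
`(σ_min(Z) + σ_min(Z̄)) ‖S‖ ≤ ‖UᵀE - EᵀŪ‖`. The second satisfies `(1 - UUᵀ) E = -(1 - UUᵀ) Ū H̄`,
so `σ_min(Z̄) ‖(1 - UUᵀ) Ū‖ ≤ ‖(1 - UUᵀ) E‖`, and symmetrically with `U` and `Ū` exchanged
(`‖(1 - UUᵀ) Ū‖ = ‖(1 - ŪŪᵀ) U‖`). Adding squares and using Pythagoras
`‖E‖² = ‖UᵀE‖² + ‖(1 - UUᵀ) E‖²` for `U` and for `Ū` gives `min(σ_min(Z), σ_min(Z̄)) ‖U - Ū‖ ≤ ‖E‖`.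
`H ⪰ σ_min(Z)` holds because `ZᵀZ = H²` and `H ⪰ 0`.
-/

section Frobenius

variable {l m n : Type*} [Fintype l] [Fintype m] [Fintype n]

lemma frobNorm_nonneg (A : Matrix m n ℝ) : 0 ≤ frobNorm A :=
  Real.sqrt_nonneg _

lemma frobNorm_sq_eq_sum (A : Matrix m n ℝ) : frobNorm A ^ 2 = ∑ i, ∑ j, A i j ^ 2 :=
  Real.sq_sqrt (by positivity)

lemma trace_transpose_mul_eq_sum (A B : Matrix m n ℝ) :
    trace (Aᵀ * B) = ∑ i, ∑ j, A i j * B i j := by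
  rw [Finset.sum_comm]
  simp [trace, mul_apply]

lemma frobNorm_sq (A : Matrix m n ℝ) : frobNorm A ^ 2 = trace (Aᵀ * A) := by
  simp only [frobNorm_sq_eq_sum, trace_transpose_mul_eq_sum, ← sq]

lemma frobNorm_neg (A : Matrix m n ℝ) : frobNorm (-A) = frobNorm A := by
  simp [frobNorm]

lemma frobNorm_transpose (A : Matrix m n ℝ) : frobNorm Aᵀ = frobNorm A := by
  simp only [frobNorm, transpose_apply]
  rw [Finset.sum_comm]

lemma trace_transpose_mul_le_frobNorm_mul (A B : Matrix m n ℝ) :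
    trace (Aᵀ * B) ≤ frobNorm A * frobNorm B := by
  simp only [trace_transpose_mul_eq_sum, frobNorm, ← Fintype.sum_prod_type']
  exact Real.sum_mul_le_sqrt_mul_sqrt Finset.univ (fun p : m × n ↦ A p.1 p.2)
    (fun p ↦ B p.1 p.2)

lemma frobNorm_sub_sq_le (A B : Matrix m n ℝ) :
    frobNorm (A - B) ^ 2 ≤ 2 * frobNorm A ^ 2 + 2 * frobNorm B ^ 2 := by
  simp only [frobNorm_sq_eq_sum, Finset.mul_sum, ← Finset.sum_add_distrib, Matrix.sub_apply]
  gcongr with i _ j _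
  nlinarith [sq_nonneg (A i j + B i j)]

lemma le_frobNorm_of_mul_frobNorm_sq_le_trace {X Y : Matrix m n ℝ} {c : ℝ}
    (h : c * frobNorm X ^ 2 ≤ trace (Xᵀ * Y)) : c * frobNorm X ≤ frobNorm Y := by
  rcases (frobNorm_nonneg X).eq_or_lt with hX | hX
  · rw [← hX, mul_zero]
    exact frobNorm_nonneg Y
  refine le_of_mul_le_mul_left ?_ hX
  nlinarith [trace_transpose_mul_le_frobNorm_mul X Y]

lemma frobNorm_sq_eq_add_of_transpose_mul_self_eq_one [DecidableEq m] [DecidableEq n]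
    {U : Matrix m n ℝ} (hU : Uᵀ * U = 1) (E : Matrix m l ℝ) :
    frobNorm E ^ 2 = frobNorm (Uᵀ * E) ^ 2 + frobNorm ((1 - U * Uᵀ) * E) ^ 2 := by
  have hUU : ∀ X : Matrix n l ℝ, Uᵀ * (U * X) = X := fun X ↦ by
    rw [← Matrix.mul_assoc, hU, Matrix.one_mul]
  simp only [frobNorm_sq, ← trace_add]
  congr 1
  simp only [transpose_mul, transpose_sub, transpose_transpose, Matrix.mul_sub,
    Matrix.sub_mul, Matrix.one_mul, Matrix.mul_assoc, hUU]
  abel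

end Frobenius

namespace Matrix

lemma isSymm_of_posSemidef_sub_smul_one {n : Type*} [DecidableEq n] {H : Matrix n n ℝ} {c : ℝ}
    (h : (H - c • 1).PosSemidef) : H.IsSymm := by
  simpa using h.isHermitian.add (isHermitian_one.smul (IsSelfAdjoint.all c))

variable {n : Type*} [Fintype n] [DecidableEq n]

open scoped MatrixOrder in
lemma trace_mul_nonneg_of_posSemidef {A B : Matrix n n ℝ} (hA : A.PosSemidef)
    (hB : B.PosSemidef) : 0 ≤ trace (A * B) := by
  obtain ⟨X, rfl⟩ := CStarAlgebra.nonneg_iff_eq_star_mul_self.mp hB.nonneg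
  rw [← Matrix.mul_assoc, trace_mul_comm, ← Matrix.mul_assoc, star_eq_conjTranspose]
  exact (hA.mul_mul_conjTranspose_same X).trace_nonneg

lemma mul_trace_le_trace_mul {A M : Matrix n n ℝ} {c : ℝ} (hA : (A - c • 1).PosSemidef)
    (hM : M.PosSemidef) : c * trace M ≤ trace (A * M) := by
  have h := trace_mul_nonneg_of_posSemidef hA hM
  rwa [Matrix.sub_mul, trace_sub, Matrix.smul_mul, Matrix.one_mul, trace_smul, smul_eq_mul,
    sub_nonneg] at h

lemma IsHermitian.posSemidef_sub_smul_one_iff {A : Matrix n n ℝ} (hA : A.IsHermitian) {c : ℝ} :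
    (A - c • 1).PosSemidef ↔ ∀ x ∈ spectrum ℝ A, c ≤ x := by
  have hAc : (A - c • 1).IsHermitian := hA.sub (isHermitian_one.smul (IsSelfAdjoint.all c))
  rw [posSemidef_iff_isHermitian_and_spectrum_nonneg, and_iff_right hAc,
    ← Algebra.algebraMap_eq_smul_one, ← spectrum.sub_singleton_eq, Set.sub_singleton]
  simp [Set.subset_def]

lemma IsHermitian.posSemidef_sub_minEig_smul_one {A : Matrix n n ℝ} (hA : A.IsHermitian) :
    (A - minEig A hA • 1).PosSemidef := by
  refine hA.posSemidef_sub_smul_one_iff.mpr fun x hx ↦ ?_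
  obtain ⟨i, rfl⟩ := hA.spectrum_real_eq_range_eigenvalues ▸ hx
  exact ciInf_le (Set.finite_range _).bddBelow i

lemma PosSemidef.posSemidef_sub_smul_one_of_sq {H : Matrix n n ℝ} (hH : H.PosSemidef) {c : ℝ}
    (hc : 0 ≤ c) (h : (H ^ 2 - c ^ 2 • 1).PosSemidef) : (H - c • 1).PosSemidef := by
  rw [(hH.pow 2).isHermitian.posSemidef_sub_smul_one_iff] at h
  refine hH.isHermitian.posSemidef_sub_smul_one_iff.mpr fun x hx ↦ ?_
  have hx0 : 0 ≤ x := (posSemidef_iff_isHermitian_and_spectrum_nonneg.mp hH).2 hx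
  have hx2 : c ^ 2 ≤ x ^ 2 := h _ (spectrum.pow_image_subset H 2 ⟨x, hx, rfl⟩)
  exact (pow_le_pow_iff_left₀ hc hx0 two_ne_zero).mp hx2

end Matrix

section MinEig

variable {n : Type*} [Fintype n] [DecidableEq n]

lemma minEig_nonneg {A : Matrix n n ℝ} (hA : A.PosSemidef) : 0 ≤ minEig A hA.1 :=
  Real.iInf_nonneg hA.eigenvalues_nonneg

lemma minEig_pos [Nonempty n] {A : Matrix n n ℝ} (hA : A.PosDef) : 0 < minEig A hA.1 := by
  obtain ⟨i, hi⟩ := exists_eq_ciInf_of_finite (f := hA.1.eigenvalues)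
  rw [minEig, ← hi]
  exact hA.eigenvalues_pos i

end MinEig

section LowerBounds

variable {m n : Type*} [Fintype m] [Fintype n] [DecidableEq n]

lemma mul_frobNorm_le_frobNorm_mul_right {H : Matrix n n ℝ} {c : ℝ}
    (hH : (H - c • 1).PosSemidef) (X : Matrix m n ℝ) : c * frobNorm X ≤ frobNorm (X * H) := by
  refine le_frobNorm_of_mul_frobNorm_sq_le_trace ?_
  rw [frobNorm_sq, ← Matrix.mul_assoc, trace_mul_comm (Xᵀ * X) H]
  simpa using Matrix.mul_trace_le_trace_mul hH (posSemidef_conjTranspose_mul_self X)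

lemma add_mul_frobNorm_le_frobNorm_mul_add_mul [DecidableEq m] {H : Matrix m m ℝ}
    {K : Matrix n n ℝ} {a b : ℝ} (hH : (H - a • 1).PosSemidef) (hK : (K - b • 1).PosSemidef)
    (S : Matrix m n ℝ) :
    (a + b) * frobNorm S ≤ frobNorm (H * S + S * K) := by
  refine le_frobNorm_of_mul_frobNorm_sq_le_trace ?_
  have hleft : a * trace (S * Sᵀ) ≤ trace (H * (S * Sᵀ)) := by
    simpa using Matrix.mul_trace_le_trace_mul hH (posSemidef_self_mul_conjTranspose S)
  have hright : b * trace (Sᵀ * S) ≤ trace (K * (Sᵀ * S)) := by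
    simpa using Matrix.mul_trace_le_trace_mul hK (posSemidef_conjTranspose_mul_self S)
  rw [trace_mul_comm S, ← Matrix.mul_assoc, trace_mul_comm (H * S)] at hleft
  rw [trace_mul_comm K, Matrix.mul_assoc] at hright
  rw [Matrix.mul_add, trace_add, add_mul, frobNorm_sq]
  exact add_le_add hleft hright

end LowerBounds

section PolarFactor

variable {m n : Type*} [Fintype m] [Fintype n] [DecidableEq n]

lemma frobNorm_sub_sq_eq_of_transpose_mul_self_eq_one [DecidableEq m] {U : Matrix m n ℝ}
    (hU : Uᵀ * U = 1) (V : Matrix m n ℝ) :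
    frobNorm (U - V) ^ 2 = frobNorm (1 - Uᵀ * V) ^ 2 + frobNorm ((1 - U * Uᵀ) * V) ^ 2 := by
  have hPU : (1 - U * Uᵀ) * (U - V) = -((1 - U * Uᵀ) * V) := by
    simp only [Matrix.mul_sub, Matrix.sub_mul, Matrix.one_mul, Matrix.mul_assoc, hU,
      Matrix.mul_one]
    abel
  rw [frobNorm_sq_eq_add_of_transpose_mul_self_eq_one hU (U - V), Matrix.mul_sub, hU, hPU,
    frobNorm_neg]

lemma frobNorm_one_sub_mul_transpose_mul_comm [DecidableEq m] {U V : Matrix m n ℝ}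
    (hU : Uᵀ * U = 1) (hV : Vᵀ * V = 1) :
    frobNorm ((1 - U * Uᵀ) * V) = frobNorm ((1 - V * Vᵀ) * U) := by
  have hUV := frobNorm_sq_eq_add_of_transpose_mul_self_eq_one hU V
  have hVU := frobNorm_sq_eq_add_of_transpose_mul_self_eq_one hV U
  rw [frobNorm_sq V, frobNorm_sq U, hV, ← hU, ← transpose_transpose (Uᵀ * V), transpose_mul,
    transpose_transpose, frobNorm_transpose] at *
  exact (pow_left_inj₀ (frobNorm_nonneg _) (frobNorm_nonneg _) two_ne_zero).mp (by linarith)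

lemma add_mul_frobNorm_one_sub_transpose_mul_le {U V : Matrix m n ℝ} {H K : Matrix n n ℝ}
    {a b : ℝ} (hU : Uᵀ * U = 1) (hV : Vᵀ * V = 1) (hH : (H - a • 1).PosSemidef)
    (hK : (K - b • 1).PosSemidef) :
    (a + b) * frobNorm (1 - Uᵀ * V)
      ≤ frobNorm (Uᵀ * (U * H - V * K) - (Vᵀ * (U * H - V * K))ᵀ) := by
  have hUU : ∀ X : Matrix n n ℝ, Uᵀ * (U * X) = X := fun X ↦ by
    rw [← Matrix.mul_assoc, hU, Matrix.one_mul]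
  have hVV : ∀ X : Matrix n n ℝ, Vᵀ * (V * X) = X := fun X ↦ by
    rw [← Matrix.mul_assoc, hV, Matrix.one_mul]
  have hSylvester : H * (1 - Uᵀ * V) + (1 - Uᵀ * V) * K
      = Uᵀ * (U * H - V * K) - (Vᵀ * (U * H - V * K))ᵀ := by
    simp only [transpose_mul, transpose_sub, transpose_transpose,
      (isSymm_of_posSemidef_sub_smul_one hH).eq, (isSymm_of_posSemidef_sub_smul_one hK).eq,
      Matrix.mul_sub, Matrix.sub_mul, Matrix.mul_one, Matrix.one_mul, Matrix.mul_assoc, hUU, hVV]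
    abel
  exact hSylvester ▸ add_mul_frobNorm_le_frobNorm_mul_add_mul hH hK (1 - Uᵀ * V)

lemma mul_frobNorm_one_sub_mul_transpose_mul_le [DecidableEq m] {U V : Matrix m n ℝ}
    {K : Matrix n n ℝ} {b : ℝ} (hU : Uᵀ * U = 1) (hK : (K - b • 1).PosSemidef) (H : Matrix n n ℝ) :
    b * frobNorm ((1 - U * Uᵀ) * V) ≤ frobNorm ((1 - U * Uᵀ) * (U * H - V * K)) := by
  have hPE : (1 - U * Uᵀ) * (U * H - V * K) = -((1 - U * Uᵀ) * V * K) := by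
    simp only [Matrix.mul_sub, Matrix.sub_mul, Matrix.one_mul, Matrix.mul_assoc,
      ← Matrix.mul_assoc Uᵀ U, hU]
    abel
  rw [hPE, frobNorm_neg]
  exact mul_frobNorm_le_frobNorm_mul_right hK _

theorem min_mul_frobNorm_sub_le_frobNorm_mul_sub_mul [DecidableEq m] {U V : Matrix m n ℝ}
    {H K : Matrix n n ℝ} {a b : ℝ} (hU : Uᵀ * U = 1) (hV : Vᵀ * V = 1) (hH : (H - a • 1).PosSemidef)
    (hK : (K - b • 1).PosSemidef) :
    min a b * frobNorm (U - V) ≤ frobNorm (U * H - V * K) := by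
  set c := min a b
  rcases le_or_gt c 0 with hc | hc
  · exact (mul_nonpos_of_nonpos_of_nonneg hc (frobNorm_nonneg _)).trans (frobNorm_nonneg _)
  set E := U * H - V * K
  have hS := add_mul_frobNorm_one_sub_transpose_mul_le hU hV hH hK
  have hP := mul_frobNorm_one_sub_mul_transpose_mul_le (V := V) hU hK H
  have hQ := mul_frobNorm_one_sub_mul_transpose_mul_le (V := U) hV hH K
  rw [← neg_sub (U * H), Matrix.mul_neg, frobNorm_neg,
    ← frobNorm_one_sub_mul_transpose_mul_comm hU hV] at hQ
  have hR := frobNorm_sub_sq_le (Uᵀ * E) (Vᵀ * E)ᵀ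
  rw [frobNorm_transpose] at hR
  have hs := frobNorm_nonneg (1 - Uᵀ * V)
  have hp := frobNorm_nonneg ((1 - U * Uᵀ) * V)
  have hSc : (2 * c * frobNorm (1 - Uᵀ * V)) ^ 2 ≤ frobNorm (Uᵀ * E - (Vᵀ * E)ᵀ) ^ 2 := by
    refine pow_le_pow_left₀ (by positivity) (le_trans ?_ hS) 2
    gcongr
    linarith [min_le_left a b, min_le_right a b]
  have hPc : (c * frobNorm ((1 - U * Uᵀ) * V)) ^ 2 ≤ frobNorm ((1 - U * Uᵀ) * E) ^ 2 :=
    pow_le_pow_left₀ (by positivity) (le_trans (by gcongr; exact min_le_right a b) hP) 2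
  have hQc : (c * frobNorm ((1 - U * Uᵀ) * V)) ^ 2 ≤ frobNorm ((1 - V * Vᵀ) * E) ^ 2 :=
    pow_le_pow_left₀ (by positivity) (le_trans (by gcongr; exact min_le_left a b) hQ) 2
  refine le_of_pow_le_pow_left₀ two_ne_zero (frobNorm_nonneg E) ?_
  linear_combination c ^ 2 * frobNorm_sub_sq_eq_of_transpose_mul_self_eq_one hU V + hSc / 4
    + hR / 4 + hPc / 2 + hQc / 2 - frobNorm_sq_eq_add_of_transpose_mul_self_eq_one hU E / 2
    - frobNorm_sq_eq_add_of_transpose_mul_self_eq_one hV E / 2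

end PolarFactor

section SigmaMin

variable {T K : ℕ}

lemma sigmaMin_pos [NeZero K] {Z : Matrix (Fin T) (Fin K) ℝ} (hZ : (Zᵀ * Z).PosDef) :
    0 < sigmaMin Z :=
  Real.sqrt_pos.mpr (minEig_pos hZ)

lemma posSemidef_sub_sigmaMin_smul_one {U : Matrix (Fin T) (Fin K) ℝ}
    {H : Matrix (Fin K) (Fin K) ℝ} (hU : Uᵀ * U = 1) (hH : H.PosSemidef) :
    (H - sigmaMin (U * H) • 1).PosSemidef := by
  have hZ : (U * H)ᵀ * (U * H) = H ^ 2 := by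
    rw [transpose_mul, (isHermitian_iff_isSymm.mp hH.isHermitian).eq, Matrix.mul_assoc,
      ← Matrix.mul_assoc Uᵀ, hU, Matrix.one_mul, sq]
  refine hH.posSemidef_sub_smul_one_of_sq (Real.sqrt_nonneg _) ?_
  rw [← hZ, sigmaMin, Real.sq_sqrt (minEig_nonneg (hZ ▸ hH.pow 2))]
  exact IsHermitian.posSemidef_sub_minEig_smul_one _

end SigmaMin

/-- Polar-decomposition perturbation bound (Li 1993), used in Lemma 4: the orthonormal
polar factors satisfy `‖U − Ū‖_F ≤ ‖Z − Z̄‖_F / min(σ_min(Z), σ_min(Z̄))`. -/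
theorem polar_factor_perturbation {T K : ℕ}
    (Z Zbar U Ubar : Matrix (Fin T) (Fin K) ℝ)
    (Hm Hbar : Matrix (Fin K) (Fin K) ℝ)
    (hZ : (Zᵀ * Z).PosDef) (hZbar : (Zbarᵀ * Zbar).PosDef)
    (hU : Uᵀ * U = 1) (hUbar : Ubarᵀ * Ubar = 1)
    (hHm : Hm.PosDef) (hHbar : Hbar.PosDef)
    (hZdec : Z = U * Hm) (hZbardec : Zbar = Ubar * Hbar) :
    frobNorm (U - Ubar) ≤ frobNorm (Z - Zbar) / min (sigmaMin Z) (sigmaMin Zbar) := by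
  rcases K.eq_zero_or_pos with rfl | hK
  · simp [frobNorm]
  have : NeZero K := ⟨hK.ne'⟩
  subst hZdec hZbardec
  rw [le_div_iff₀ (lt_min (sigmaMin_pos hZ) (sigmaMin_pos hZbar)), mul_comm]
  exact min_mul_frobNorm_sub_le_frobNorm_mul_sub_mul hU hUbar
    (posSemidef_sub_sigmaMin_smul_one hU hHm.posSemidef)
    (posSemidef_sub_sigmaMin_smul_one hUbar hHbar.posSemidef)
end
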